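/- arXiv:1403.6543 — 4 statements merged into one kernel-verified Lean document; each statement's English description precedes it below -/
import Mathlib

section
/- Let Φ (3N×M) and Ψ (3N×(3N−M)) together form an orthogonal matrix [Φ Ψ] (i.e., ΦᵀΦ = I, ΨᵀΨ = I, ΦᵀΨ = 0, and ΦΦᵀ + ΨΨᵀ = I). If A is symmetric positive definite, then A⁻¹Φ(ΦᵀA⁻¹Φ)⁻¹ = Φ − Ψ(ΨᵀAΨ)⁻¹ΨᵀAΦ. -/
/-!
Put `X = Φ - Ψ (ΨᵀAΨ)⁻¹ ΨᵀAΦ`. Then `ΨᵀAX = 0`, so `AX` lies in the range of `Φ`: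
`AX = Φ C` with `C = ΦᵀAX`. Hence `A⁻¹Φ C = X`, and applying `Φᵀ` gives
`(ΦᵀA⁻¹Φ) C = ΦᵀX = 1`, i.e. `C = (ΦᵀA⁻¹Φ)⁻¹`.
-/

open Matrix

namespace Matrix

variable {m n k l R : Type*} [Fintype m] [Fintype n] [Fintype k] [CommRing R]

lemma eq_mul_transpose_mul_of_transpose_mul_eq_zero [DecidableEq m]
    {Φ : Matrix m n R} {Ψ : Matrix m k R} (hsum : Φ * Φᵀ + Ψ * Ψᵀ = 1)
    {Y : Matrix m l R} (hY : Ψᵀ * Y = 0) : Y = Φ * (Φᵀ * Y) := by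
  calc Y = (Φ * Φᵀ + Ψ * Ψᵀ) * Y := by rw [hsum, Matrix.one_mul]
    _ = Φ * (Φᵀ * Y) := by
      rw [Matrix.add_mul, Matrix.mul_assoc, Matrix.mul_assoc Ψ, hY, Matrix.mul_zero, add_zero]

lemma transpose_mul_mul_sub_mul_inv_eq_zero [DecidableEq k] (A : Matrix m m R) (Φ : Matrix m l R)
    {Ψ : Matrix m k R} (hS : IsUnit (Ψᵀ * A * Ψ).det) :
    Ψᵀ * A * (Φ - Ψ * (Ψᵀ * A * Ψ)⁻¹ * Ψᵀ * A * Φ) = 0 := by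
  have hcancel : Ψᵀ * A * (Ψ * (Ψᵀ * A * Ψ)⁻¹ * Ψᵀ * A * Φ) = Ψᵀ * A * Φ := by
    calc Ψᵀ * A * (Ψ * (Ψᵀ * A * Ψ)⁻¹ * Ψᵀ * A * Φ)
        = (Ψᵀ * A * Ψ) * (Ψᵀ * A * Ψ)⁻¹ * (Ψᵀ * A * Φ) := by simp only [Matrix.mul_assoc]
      _ = Ψᵀ * A * Φ := by rw [mul_nonsing_inv _ hS, Matrix.one_mul]
  rw [Matrix.mul_sub, hcancel, sub_self]

theorem inv_mul_mul_inv_transpose_mul_inv_mul_eq [DecidableEq m] [DecidableEq n] [DecidableEq k]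
    {Φ : Matrix m n R} {Ψ : Matrix m k R} {A : Matrix m m R} (hΦ : Φᵀ * Φ = 1)
    (hΦΨ : Φᵀ * Ψ = 0) (hsum : Φ * Φᵀ + Ψ * Ψᵀ = 1) (hA : IsUnit A.det)
    (hS : IsUnit (Ψᵀ * A * Ψ).det) :
    A⁻¹ * Φ * (Φᵀ * A⁻¹ * Φ)⁻¹ = Φ - Ψ * (Ψᵀ * A * Ψ)⁻¹ * Ψᵀ * A * Φ := by
  set X := Φ - Ψ * (Ψᵀ * A * Ψ)⁻¹ * Ψᵀ * A * Φ
  have hAX : A * X = Φ * (Φᵀ * (A * X)) := by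
    refine eq_mul_transpose_mul_of_transpose_mul_eq_zero hsum ?_
    rw [← Matrix.mul_assoc]
    exact transpose_mul_mul_sub_mul_inv_eq_zero A Φ hS
  have hΦX : Φᵀ * X = 1 := by
    simp only [X, Matrix.mul_sub, hΦ, Matrix.mul_assoc, ← Matrix.mul_assoc Φᵀ Ψ, hΦΨ,
      Matrix.zero_mul, sub_zero]
  have hX : A⁻¹ * Φ * (Φᵀ * (A * X)) = X := by
    rw [Matrix.mul_assoc, ← hAX, ← Matrix.mul_assoc, nonsing_inv_mul _ hA, Matrix.one_mul]
  have hinv : (Φᵀ * A⁻¹ * Φ)⁻¹ = Φᵀ * (A * X) := by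
    refine inv_eq_right_inv ?_
    rw [Matrix.mul_assoc Φᵀ, Matrix.mul_assoc, hX, hΦX]
  rw [hinv, hX]

end Matrix

theorem matrix_identity_AinvPhi
    (N M : ℕ) (Φ : Matrix (Fin (3 * N)) (Fin M) ℝ)
    (Ψ : Matrix (Fin (3 * N)) (Fin (3 * N - M)) ℝ)
    (A : Matrix (Fin (3 * N)) (Fin (3 * N)) ℝ)
    (hΦ : Φᵀ * Φ = 1) (hΨ : Ψᵀ * Ψ = 1) (hΦΨ : Φᵀ * Ψ = 0)
    (hsum : Φ * Φᵀ + Ψ * Ψᵀ = 1) (hA : A.PosDef) :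
    A⁻¹ * Φ * (Φᵀ * A⁻¹ * Φ)⁻¹ = Φ - Ψ * (Ψᵀ * A * Ψ)⁻¹ * Ψᵀ * A * Φ := by
  have hΨinj : Function.Injective Ψ.mulVec :=
    Function.LeftInverse.injective (g := Ψᵀ.mulVec) fun x => by
      rw [mulVec_mulVec, hΨ, one_mulVec]
  have hS : (Ψᵀ * A * Ψ).PosDef := by
    simpa [conjTranspose_eq_transpose_of_trivial] using hA.conjTranspose_mul_mul_same hΨinj
  exact inv_mul_mul_inv_transpose_mul_inv_mul_eq hΦ hΦΨ hsum
    ((isUnit_iff_isUnit_det A).mp hA.isUnit) ((isUnit_iff_isUnit_det _).mp hS.isUnit)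
end

section
/- Under the same setup, the memory function θ(t) = −ΦᵀAΨ cos(Ωt) ΨᵀA⁻¹Φ(ΦᵀA⁻¹Φ)⁻¹, where Ω = (ΨᵀAΨ)^{1/2}, equals ΦᵀAΨ cos(Ωt) Ω⁻² ΨᵀAΦ. -/
/-!
Since `[Φ Ψ]` is orthogonal, the `(Ψ, Φ)` block of `A A⁻¹ = 1` reads
`ΨᵀAΦ · ΦᵀA⁻¹Φ + Â · ΨᵀA⁻¹Φ = 0`, so `ΨᵀA⁻¹Φ (ΦᵀA⁻¹Φ)⁻¹ = -Â⁻¹ ΨᵀAΦ`; both compressions of the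
positive definite `A` and `A⁻¹` are positive definite, hence invertible. It remains to identify
`Ω⁻²`, the functional calculus of `x ↦ x⁻¹` at `Â`, with the matrix inverse `Â⁻¹`.
-/

open Matrix

namespace Matrix

variable {m n k 𝕜 R : Type*} [Fintype m] [Fintype n] [Fintype k]

lemma mulVec_injective_of_mul_eq_one [DecidableEq k] [CommRing R] {B : Matrix k n R}
    {C : Matrix n k R} (h : B * C = 1) : Function.Injective C.mulVec :=
  Function.LeftInverse.injective (g := B.mulVec) fun x => by rw [mulVec_mulVec, h, one_mulVec]

open scoped ComplexOrder in
lemma PosDef.conjTranspose_mul_mul_of_conjTranspose_mul_self_eq_one [DecidableEq k] [RCLike 𝕜]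
    {A : Matrix n n 𝕜} (hA : A.PosDef) {B : Matrix n k 𝕜} (hB : Bᴴ * B = 1) :
    (Bᴴ * A * B).PosDef :=
  hA.conjTranspose_mul_mul_same (mulVec_injective_of_mul_eq_one hB)

variable [DecidableEq n]

/-- The functional calculus of `x ↦ x⁻¹` is the Moore–Penrose inverse, which agrees with `A⁻¹`
only when `A` is invertible (otherwise `A⁻¹ = 0`). -/
lemma IsHermitian.cfc_inv_eq_nonsing_inv [RCLike 𝕜] {A : Matrix n n 𝕜} (hA : A.IsHermitian)
    (hA' : IsUnit A) : hA.cfc (fun x => x⁻¹) = A⁻¹ := by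
  rw [← hA.cfc_eq, cfc_ringInverse_id A hA' hA.isSelfAdjoint, nonsing_inv_eq_ringInverse]

variable [CommRing R] {A : Matrix n n R} {P : Matrix n m R} {Q : Matrix n k R}

/-- The `(Q, P)` block of `A * A⁻¹ = 1` in the orthogonal frame `[P Q]`. -/
lemma offDiag_block_mul_inv_eq_zero (hA : IsUnit A.det) (hsum : P * Pᵀ + Q * Qᵀ = 1)
    (hQP : Qᵀ * P = 0) : Qᵀ * A * P * (Pᵀ * A⁻¹ * P) + Qᵀ * A * Q * (Qᵀ * A⁻¹ * P) = 0 :=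
  calc Qᵀ * A * P * (Pᵀ * A⁻¹ * P) + Qᵀ * A * Q * (Qᵀ * A⁻¹ * P)
      = Qᵀ * (A * (P * Pᵀ + Q * Qᵀ) * A⁻¹) * P := by
        simp only [Matrix.mul_add, Matrix.add_mul, Matrix.mul_assoc]
    _ = 0 := by rw [hsum, Matrix.mul_one, mul_nonsing_inv A hA, Matrix.mul_one, hQP]

lemma inv_block_mul_inv_eq_neg_inv_mul_block [DecidableEq m] [DecidableEq k] (hA : IsUnit A.det)
    (hsum : P * Pᵀ + Q * Qᵀ = 1) (hQP : Qᵀ * P = 0) (hQAQ : IsUnit (Qᵀ * A * Q).det)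
    (hPAP : IsUnit (Pᵀ * A⁻¹ * P).det) :
    Qᵀ * A⁻¹ * P * (Pᵀ * A⁻¹ * P)⁻¹ = -((Qᵀ * A * Q)⁻¹ * (Qᵀ * A * P)) := by
  have hblock := eq_neg_of_add_eq_zero_right (offDiag_block_mul_inv_eq_zero hA hsum hQP)
  calc Qᵀ * A⁻¹ * P * (Pᵀ * A⁻¹ * P)⁻¹
      = (Qᵀ * A * Q)⁻¹ * (Qᵀ * A * Q * (Qᵀ * A⁻¹ * P)) * (Pᵀ * A⁻¹ * P)⁻¹ := by
        rw [← Matrix.mul_assoc _ (Qᵀ * A * Q), nonsing_inv_mul _ hQAQ, Matrix.one_mul]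
    _ = -((Qᵀ * A * Q)⁻¹ * (Qᵀ * A * P) * ((Pᵀ * A⁻¹ * P) * (Pᵀ * A⁻¹ * P)⁻¹)) := by
        rw [hblock]
        simp only [Matrix.mul_neg, Matrix.neg_mul, Matrix.mul_assoc]
    _ = -((Qᵀ * A * Q)⁻¹ * (Qᵀ * A * P)) := by rw [mul_nonsing_inv _ hPAP, Matrix.mul_one]

end Matrix

/-- The memory function −ΦᵀAΨ cos(Ωt) ΨᵀA⁻¹Φ(ΦᵀA⁻¹Φ)⁻¹ equals
ΦᵀAΨ cos(Ωt) Ω⁻² ΨᵀAΦ, where Ω = (ΨᵀAΨ)^{1/2} and `cos (Ω t)`, `Ω⁻²`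
are defined via the spectral functional calculus of Â = ΨᵀAΨ. -/
theorem memory_kernel_simplification
    (N M : ℕ) (Φ : Matrix (Fin (3 * N)) (Fin M) ℝ)
    (Ψ : Matrix (Fin (3 * N)) (Fin (3 * N - M)) ℝ)
    (A : Matrix (Fin (3 * N)) (Fin (3 * N)) ℝ)
    (hΦ : Φᵀ * Φ = 1) (hΨ : Ψᵀ * Ψ = 1) (hΦΨ : Φᵀ * Ψ = 0)
    (hsum : Φ * Φᵀ + Ψ * Ψᵀ = 1) (hA : A.PosDef)
    (hH : (Ψᵀ * A * Ψ).IsHermitian) (t : ℝ) :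
    -- cos (Ω t) via functional calculus on Â = ΨᵀAΨ
    let cosΩt := hH.cfc (fun x => Real.cos (Real.sqrt x * t))
    -- Ω⁻² via functional calculus
    let Ωinv2 := hH.cfc (fun x => x⁻¹)
    (-(Φᵀ * A * Ψ) * cosΩt * (Ψᵀ * A⁻¹ * Φ * (Φᵀ * A⁻¹ * Φ)⁻¹)
      = (Φᵀ * A * Ψ) * cosΩt * Ωinv2 * (Ψᵀ * A * Φ)) := by
  intro cosΩt Ωinv2
  have hÂ : (Ψᵀ * A * Ψ).PosDef := by
    simpa using hA.conjTranspose_mul_mul_of_conjTranspose_mul_self_eq_one (B := Ψ) (by simpa)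
  have hB : (Φᵀ * A⁻¹ * Φ).PosDef := by
    simpa using hA.inv.conjTranspose_mul_mul_of_conjTranspose_mul_self_eq_one (B := Φ) (by simpa)
  have hΨΦ : Ψᵀ * Φ = 0 := by simpa using congrArg transpose hΦΨ
  rw [inv_block_mul_inv_eq_neg_inv_mul_block (isUnit_iff_isUnit_det _ |>.mp hA.isUnit) hsum hΨΦ
      (isUnit_iff_isUnit_det _ |>.mp hÂ.isUnit) (isUnit_iff_isUnit_det _ |>.mp hB.isUnit),
    show Ωinv2 = (Ψᵀ * A * Ψ)⁻¹ from hH.cfc_inv_eq_nonsing_inv hÂ.isUnit]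
  simp only [Matrix.mul_assoc, Matrix.neg_mul, Matrix.mul_neg, neg_neg]
end

section
/- Let Â be symmetric positive definite with Ω = Â^{1/2}, and let ξ̂, η̂ be independent Gaussian vectors with mean zero and covariances k_BT·Â⁻¹ and k_BT·I respectively. Then R(t) = C[cos(Ωt)ξ̂ + Ω⁻¹sin(Ωt)η̂] (C any fixed matrix) satisfies E[R(t)R(s)ᵀ] = k_BT · C cos(Ω(t−s)) Ω⁻² Cᵀ; in particular the covariance depends only on t−s (stationarity). -/
/-!
Write `c_t = cos(Ω t)` and `s_t = Ω⁻¹ sin(Ω t)`. Expanding `R(t) R(s)ᵀ` bilinearly, the mixed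
`ξ̂η̂` moments vanish by independence and zero means, so
`E[R(t) R(s)ᵀ] = k_BT · C (c_t Â⁻¹ c_s + s_t s_s) Cᵀ` (the `c`, `s` are symmetric).
All factors are functions of the single matrix `Â`, so by the functional calculus the middle
factor is evaluated eigenvalue-wise, where `cos a cos b + sin a sin b = cos (a - b)` turns it
into `cos(Ω(t - s)) Â⁻¹`.
-/

open Matrix MeasureTheory ProbabilityTheory

theorem cfc_cos_inv_cos_add_sin_sin {A : Type*} [Ring A] [StarRing A] [Algebra ℝ A]
    [TopologicalSpace A] [ContinuousFunctionalCalculus ℝ A IsSelfAdjoint] {a : A}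
    (hpos : ∀ x ∈ spectrum ℝ a, 0 < x) (t s : ℝ) :
    cfc (fun x => Real.cos (√x * t)) a * cfc (fun x : ℝ => x⁻¹) a
        * cfc (fun x => Real.cos (√x * s)) a
      + cfc (fun x => Real.sin (√x * t) / √x) a * cfc (fun x => Real.sin (√x * s) / √x) a
      = cfc (fun x => Real.cos (√x * (t - s))) a * cfc (fun x : ℝ => x⁻¹) a := by
  have hne : ∀ x ∈ spectrum ℝ a, x ≠ 0 := fun x hx => (hpos x hx).ne'
  have hsqrt : ∀ x ∈ spectrum ℝ a, √x ≠ 0 := fun x hx => (Real.sqrt_pos.2 (hpos x hx)).ne'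
  -- `hinv` and `hsin` discharge the continuity side goals of `cfc_mul` and `cfc_add` below.
  have hinv : ContinuousOn (fun x : ℝ => x⁻¹) (spectrum ℝ a) := continuousOn_inv₀.mono hne
  have hsin : ∀ u : ℝ, ContinuousOn (fun x => Real.sin (√x * u) / √x) (spectrum ℝ a) :=
    fun u => ContinuousOn.div (by fun_prop) (by fun_prop) hsqrt
  rw [← cfc_mul _ _ a, ← cfc_mul _ _ a, ← cfc_mul _ _ a, ← cfc_add _ _ (a := a),
    ← cfc_mul _ _ a]
  refine cfc_congr fun x hx => ?_
  have hsq : √x ^ 2 = x := Real.sq_sqrt (hpos x hx).le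
  rw [mul_sub, Real.cos_sub]
  field_simp
  rw [hsq]
  ring

theorem Matrix.transpose_cfc {n : Type*} [Fintype n] [DecidableEq n] (f : ℝ → ℝ)
    (A : Matrix n n ℝ) : (cfc f A)ᵀ = cfc f A :=
  (isHermitian_iff_isSymm.mp (cfc_predicate f A)).eq

open scoped MatrixOrder in
theorem Matrix.PosDef.spectrum_real_pos {n : Type*} [Fintype n] [DecidableEq n]
    {A : Matrix n n ℝ} (hA : A.PosDef) {x : ℝ} (hx : x ∈ spectrum ℝ A) : 0 < x :=
  hA.isStrictlyPositive.spectrum_pos hx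

section CrossMoments

variable {Ω ι κ α β : Type*} [MeasurableSpace Ω] {μ : Measure Ω}

noncomputable def crossMomentMatrix (μ : Measure Ω) (X : Ω → ι → ℝ) (Y : Ω → κ → ℝ) :
    Matrix ι κ ℝ :=
  Matrix.of fun k l => ∫ ω, X ω k * Y ω l ∂μ

theorem memLp_mulVec_apply [Fintype ι] {p : ENNReal} {X : Ω → ι → ℝ}
    (hX : ∀ k, MemLp (fun ω => X ω k) p μ) (P : Matrix α ι ℝ) (i : α) :
    MemLp (fun ω => (P *ᵥ X ω) i) p μ := by
  simpa only [mulVec, dotProduct, Finset.sum_fn] using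
    memLp_finsetSum' _ fun k _ => (hX k).const_mul (P i k)

variable {X : Ω → ι → ℝ} {Y : Ω → κ → ℝ}

theorem integrable_mulVec_mul_mulVec [Fintype ι] [Fintype κ]
    (hX : ∀ k, MemLp (fun ω => X ω k) 2 μ) (hY : ∀ l, MemLp (fun ω => Y ω l) 2 μ)
    (P : Matrix α ι ℝ) (Q : Matrix β κ ℝ) (i : α) (j : β) :
    Integrable (fun ω => (P *ᵥ X ω) i * (Q *ᵥ Y ω) j) μ :=
  (memLp_mulVec_apply hX P i).integrable_mul (memLp_mulVec_apply hY Q j)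

theorem integral_mulVec_mul_mulVec [Fintype ι] [Fintype κ]
    (hX : ∀ k, MemLp (fun ω => X ω k) 2 μ) (hY : ∀ l, MemLp (fun ω => Y ω l) 2 μ)
    (P : Matrix α ι ℝ) (Q : Matrix β κ ℝ) (i : α) (j : β) :
    ∫ ω, (P *ᵥ X ω) i * (Q *ᵥ Y ω) j ∂μ = (P * crossMomentMatrix μ X Y * Qᵀ) i j := by
  have hXY : ∀ k l, Integrable (fun ω => P i k * Q j l * (X ω k * Y ω l)) μ :=
    fun k l => ((hX k).integrable_mul (hY l)).const_mul _
  calc ∫ ω, (P *ᵥ X ω) i * (Q *ᵥ Y ω) j ∂μ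
      = ∫ ω, ∑ k, ∑ l, P i k * Q j l * (X ω k * Y ω l) ∂μ := by
        simp only [mulVec, dotProduct, Finset.sum_mul_sum]
        exact integral_congr_ae (ae_of_all _ fun ω => Finset.sum_congr rfl fun k _ =>
          Finset.sum_congr rfl fun l _ => by ring)
    _ = ∑ k, ∑ l, P i k * Q j l * ∫ ω, X ω k * Y ω l ∂μ := by
        rw [integral_finsetSum _ fun k _ => integrable_finsetSum _ fun l _ => hXY k l]
        simp only [integral_finsetSum _ fun l _ => hXY _ l, integral_const_mul]
    _ = (P * crossMomentMatrix μ X Y * Qᵀ) i j := by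
        simp only [mul_apply, crossMomentMatrix, of_apply, transpose_apply, Finset.sum_mul]
        rw [Finset.sum_comm]
        exact Finset.sum_congr rfl fun k _ => Finset.sum_congr rfl fun l _ => by ring

theorem integral_mulVec_add_mulVec_mul_mulVec_add_mulVec [Fintype ι] [Fintype κ]
    (hX : ∀ k, MemLp (fun ω => X ω k) 2 μ) (hY : ∀ l, MemLp (fun ω => Y ω l) 2 μ)
    (P : Matrix α ι ℝ) (Q : Matrix α κ ℝ) (P' : Matrix β ι ℝ) (Q' : Matrix β κ ℝ)
    (i : α) (j : β) :
    ∫ ω, (P *ᵥ X ω + Q *ᵥ Y ω) i * (P' *ᵥ X ω + Q' *ᵥ Y ω) j ∂μ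
      = (P * crossMomentMatrix μ X X * P'ᵀ + P * crossMomentMatrix μ X Y * Q'ᵀ
          + Q * crossMomentMatrix μ Y X * P'ᵀ + Q * crossMomentMatrix μ Y Y * Q'ᵀ) i j := by
  have hXX := integrable_mulVec_mul_mulVec hX hX P P' i j
  have hXY := integrable_mulVec_mul_mulVec hX hY P Q' i j
  have hYX := integrable_mulVec_mul_mulVec hY hX Q P' i j
  have hYY := integrable_mulVec_mul_mulVec hY hY Q Q' i j
  simp only [Pi.add_apply, mul_add, add_mul]
  rw [integral_add, integral_add hXX hYX, integral_add hXY hYY]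
  · simp only [integral_mulVec_mul_mulVec hX hY, integral_mulVec_mul_mulVec hX hX,
      integral_mulVec_mul_mulVec hY hX, integral_mulVec_mul_mulVec hY hY, Matrix.add_apply]
    ring
  · exact hXX.add hYX
  · exact hXY.add hYY

theorem crossMomentMatrix_eq_zero_of_indepFun (hXY : IndepFun X Y μ)
    (hX : ∀ k, AEStronglyMeasurable (fun ω => X ω k) μ)
    (hY : ∀ l, AEStronglyMeasurable (fun ω => Y ω l) μ) (hX0 : ∀ k, ∫ ω, X ω k ∂μ = 0) :
    crossMomentMatrix μ X Y = 0 := by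
  ext k l
  have := (hXY.comp (measurable_pi_apply k) (measurable_pi_apply l)
    ).integral_fun_mul_eq_mul_integral (hX k) (hY l)
  simpa [crossMomentMatrix, hX0] using this

end CrossMoments

theorem noise_covariance_stationary_general
    (d m : ℕ) (Ahat : Matrix (Fin d) (Fin d) ℝ) (hAhat : Ahat.PosDef)
    (hH : Ahat.IsHermitian) (kBT : ℝ)
    (C : Matrix (Fin m) (Fin d) ℝ)
    {Ω : Type*} [MeasureSpace Ω] (μ : Measure Ω)
    (ξ η : Ω → (Fin d → ℝ))
    (hL2ξ : ∀ i, MemLp (fun ω => ξ ω i) 2 μ)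
    (hL2η : ∀ i, MemLp (fun ω => η ω i) 2 μ)
    (hξ0 : ∀ i, ∫ ω, ξ ω i ∂μ = 0)
    (hη0 : ∀ i, ∫ ω, η ω i ∂μ = 0)
    (hξcov : ∀ i j, ∫ ω, ξ ω i * ξ ω j ∂μ = kBT * Ahat⁻¹ i j)
    (hηcov : ∀ i j, ∫ ω, η ω i * η ω j ∂μ = kBT * (if i = j then 1 else 0))
    (hindep : IndepFun ξ η μ) :
    let R : ℝ → Ω → (Fin m → ℝ) := fun t ω =>
      C *ᵥ ((hH.cfc fun x => Real.cos (Real.sqrt x * t)) *ᵥ ξ ω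
            + (hH.cfc fun x => Real.sin (Real.sqrt x * t) / Real.sqrt x) *ᵥ η ω)
    ∀ (t s : ℝ) (i j : Fin m),
      ∫ ω, R t ω i * R s ω j ∂μ
        = kBT * ((C * hH.cfc (fun x => Real.cos (Real.sqrt x * (t - s)))
            * hH.cfc (fun x => x⁻¹) * Cᵀ) i j) := by
  intro R t s i j
  have hξξ : crossMomentMatrix μ ξ ξ = kBT • cfc (fun x : ℝ => x⁻¹) Ahat := by
    rw [cfc_ringInverse_id (R := ℝ) (ha_unit := hAhat.isUnit), ← nonsing_inv_eq_ringInverse]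
    ext k l
    simp [crossMomentMatrix, hξcov]
  have hηη : crossMomentMatrix μ η η = kBT • 1 := by
    ext k l
    simp [crossMomentMatrix, hηcov, one_apply]
  have hξη := crossMomentMatrix_eq_zero_of_indepFun hindep
    (fun k => (hL2ξ k).aestronglyMeasurable) (fun l => (hL2η l).aestronglyMeasurable) hξ0
  have hηξ := crossMomentMatrix_eq_zero_of_indepFun hindep.symm
    (fun k => (hL2η k).aestronglyMeasurable) (fun l => (hL2ξ l).aestronglyMeasurable) hη0
  simp only [R, mulVec_add, mulVec_mulVec, ← hH.cfc_eq]
  rw [integral_mulVec_add_mulVec_mul_mulVec_add_mulVec hL2ξ hL2η, hξξ, hηη, hξη, hηξ]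
  conv_rhs => rw [Matrix.mul_assoc C,
    ← cfc_cos_inv_cos_add_sin_sin (fun x hx => hAhat.spectrum_real_pos hx)]
  simp only [transpose_mul, transpose_cfc, Matrix.mul_zero, Matrix.zero_mul, add_zero,
    Matrix.mul_smul, Matrix.smul_mul, Matrix.mul_one, Matrix.mul_add, Matrix.add_mul,
    Matrix.mul_assoc, Matrix.add_apply, Matrix.smul_apply, smul_eq_mul, mul_add]

/-- If `ξ̂ ~ N(0, k_BT Ahat⁻¹)` and `η̂ ~ N(0, k_BT I)` are independent (here encoded by
zero means, the prescribed covariances, square-integrability and independence), then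
`R(t) = C[cos(Ωt)ξ̂ + Ω⁻¹ sin(Ωt)η̂]` has covariance
`E[R(t)R(s)ᵀ] = k_BT · C cos(Ω(t−s)) Ω⁻² Cᵀ`, depending only on `t − s`. -/
theorem noise_covariance_stationary
    (d m : ℕ) (Ahat : Matrix (Fin d) (Fin d) ℝ) (hAhat : Ahat.PosDef)
    (hH : Ahat.IsHermitian) (kBT : ℝ) (hkBT : 0 < kBT)
    (C : Matrix (Fin m) (Fin d) ℝ)
    {Ω : Type*} [MeasureSpace Ω] (μ : Measure Ω) [IsProbabilityMeasure μ]
    (ξ η : Ω → (Fin d → ℝ))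
    (hmξ : Measurable ξ) (hmη : Measurable η)
    (hL2ξ : ∀ i, MemLp (fun ω => ξ ω i) 2 μ)
    (hL2η : ∀ i, MemLp (fun ω => η ω i) 2 μ)
    (hξ0 : ∀ i, ∫ ω, ξ ω i ∂μ = 0)
    (hη0 : ∀ i, ∫ ω, η ω i ∂μ = 0)
    (hξcov : ∀ i j, ∫ ω, ξ ω i * ξ ω j ∂μ = kBT * Ahat⁻¹ i j)
    (hηcov : ∀ i j, ∫ ω, η ω i * η ω j ∂μ = kBT * (if i = j then 1 else 0))
    (hindep : IndepFun ξ η μ) :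
    let R : ℝ → Ω → (Fin m → ℝ) := fun t ω =>
      C *ᵥ ((hH.cfc fun x => Real.cos (Real.sqrt x * t)) *ᵥ ξ ω
            + (hH.cfc fun x => Real.sin (Real.sqrt x * t) / Real.sqrt x) *ᵥ η ω)
    ∀ (t s : ℝ) (i j : Fin m),
      ∫ ω, R t ω i * R s ω j ∂μ
        = kBT * ((C * hH.cfc (fun x => Real.cos (Real.sqrt x * (t - s)))
            * hH.cfc (fun x => x⁻¹) * Cᵀ) i j) :=
  noise_covariance_stationary_general d m Ahat hAhat hH kBT C μ ξ η hL2ξ hL2η hξ0 hη0 hξcov hηcov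
    hindep
end

section
/- With [Φ Ψ] orthogonal and A symmetric positive definite, Q_x x = Ψ(ξ + (ΨᵀAΨ)⁻¹ΨᵀAΦ q) where x = Φq + Ψξ and Q_x = I − A⁻¹Φ(ΦᵀA⁻¹Φ)⁻¹Φᵀ. -/
open Matrix

/-! With `B := Φ - Ψ (ΨᵀAΨ)⁻¹ ΨᵀAΦ` one has `ΦᵀB = 1` and `ΨᵀAB = 0`, so `AB` lies in the range
of `Φ`, i.e. `B = A⁻¹Φ (ΦᵀAB)`; multiplying by `Φᵀ` shows `ΦᵀAB = (ΦᵀA⁻¹Φ)⁻¹`, hence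
`A⁻¹Φ(ΦᵀA⁻¹Φ)⁻¹ = B`. Substituting this into `Q_x` and using `ΦΦᵀ + ΨΨᵀ = 1` gives
`Q_x = ΨΨᵀ + Ψ(ΨᵀAΨ)⁻¹ΨᵀAΦΦᵀ`. Invertibility of `ΨᵀAΨ` comes from `A` being positive definite
and `Ψ` having orthonormal columns. -/

theorem Matrix.PosDef.transpose_mul_mul_of_transpose_mul_self {n m : Type*} [Fintype n]
    [Fintype m] [DecidableEq m] {A : Matrix n n ℝ} (hA : A.PosDef) {B : Matrix n m ℝ}
    (hB : Bᵀ * B = 1) : (Bᵀ * A * B).PosDef := by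
  have hinj : Function.Injective B.mulVec := fun x y hxy => by
    simpa [mulVec_mulVec, hB] using congrArg (Bᵀ *ᵥ ·) hxy
  simpa only [conjTranspose_eq_transpose_of_trivial] using hA.conjTranspose_mul_mul_same hinj

theorem Matrix.inv_mul_mul_inv_eq_sub_of_orthogonal_split {R n m k : Type*} [CommRing R]
    [Fintype n] [Fintype m] [Fintype k] [DecidableEq n] [DecidableEq m] [DecidableEq k]
    {Φ : Matrix n m R} {Ψ : Matrix n k R} {A : Matrix n n R}
    (hΦ : Φᵀ * Φ = 1) (hΦΨ : Φᵀ * Ψ = 0) (hsum : Φ * Φᵀ + Ψ * Ψᵀ = 1)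
    (hA : IsUnit A.det) (hS : IsUnit (Ψᵀ * A * Ψ).det) :
    A⁻¹ * Φ * (Φᵀ * A⁻¹ * Φ)⁻¹ = Φ - Ψ * (Ψᵀ * A * Ψ)⁻¹ * (Ψᵀ * A * Φ) := by
  set B := Φ - Ψ * (Ψᵀ * A * Ψ)⁻¹ * (Ψᵀ * A * Φ)
  have hΦB : Φᵀ * B = 1 := by
    simp only [B, Matrix.mul_sub, hΦ, ← Matrix.mul_assoc, hΦΨ, Matrix.zero_mul, sub_zero]
  have hΨAB : Ψᵀ * A * B = 0 := by
    simp only [B, Matrix.mul_sub, ← Matrix.mul_assoc, mul_nonsing_inv _ hS, Matrix.one_mul,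
      sub_self]
  have hAB : A * B = Φ * (Φᵀ * A * B) := calc
    A * B = (Φ * Φᵀ + Ψ * Ψᵀ) * (A * B) := by rw [hsum, Matrix.one_mul]
    _ = Φ * (Φᵀ * A * B) + Ψ * (Ψᵀ * A * B) := by simp only [Matrix.add_mul, Matrix.mul_assoc]
    _ = Φ * (Φᵀ * A * B) := by rw [hΨAB, Matrix.mul_zero, add_zero]
  have hB : A⁻¹ * Φ * (Φᵀ * A * B) = B := by
    rw [Matrix.mul_assoc, ← hAB, nonsing_inv_mul_cancel_left _ _ hA]
  have hinv : (Φᵀ * A⁻¹ * Φ)⁻¹ = Φᵀ * A * B := inv_eq_right_inv <| calc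
    Φᵀ * A⁻¹ * Φ * (Φᵀ * A * B) = Φᵀ * (A⁻¹ * Φ * (Φᵀ * A * B)) := by
      simp only [Matrix.mul_assoc]
    _ = 1 := by rw [hB, hΦB]
  rw [hinv, hB]

/-- With `[Φ Ψ]` orthogonal and `A` positive definite,
`Q_x x = Ψ(ξ + (ΨᵀAΨ)⁻¹ΨᵀAΦ q)` where `x = Φq + Ψξ`. -/
theorem Qx_action
    (N M : ℕ) (Φ : Matrix (Fin (3 * N)) (Fin M) ℝ)
    (Ψ : Matrix (Fin (3 * N)) (Fin (3 * N - M)) ℝ)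
    (A : Matrix (Fin (3 * N)) (Fin (3 * N)) ℝ)
    (hΦ : Φᵀ * Φ = 1) (hΨ : Ψᵀ * Ψ = 1) (hΦΨ : Φᵀ * Ψ = 0)
    (hsum : Φ * Φᵀ + Ψ * Ψᵀ = 1) (hA : A.PosDef)
    (x : Fin (3 * N) → ℝ) :
    let q := Φᵀ *ᵥ x
    let ξ := Ψᵀ *ᵥ x
    let Qx := (1 : Matrix (Fin (3 * N)) (Fin (3 * N)) ℝ)
      - A⁻¹ * Φ * (Φᵀ * A⁻¹ * Φ)⁻¹ * Φᵀ
    Qx *ᵥ x = Ψ *ᵥ (ξ + (Ψᵀ * A * Ψ)⁻¹ *ᵥ ((Ψᵀ * A * Φ) *ᵥ q)) := by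
  intro q ξ Qx
  have hAdet : IsUnit A.det := (isUnit_iff_isUnit_det A).mp hA.isUnit
  have hSdet : IsUnit (Ψᵀ * A * Ψ).det :=
    (isUnit_iff_isUnit_det _).mp (hA.transpose_mul_mul_of_transpose_mul_self hΨ).isUnit
  have hQx : Qx = Ψ * Ψᵀ + Ψ * (Ψᵀ * A * Ψ)⁻¹ * (Ψᵀ * A * Φ) * Φᵀ := by
    simp only [Qx, inv_mul_mul_inv_eq_sub_of_orthogonal_split hΦ hΦΨ hsum hAdet hSdet]
    rw [Matrix.sub_mul, ← hsum]
    abel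
  simp only [hQx, add_mulVec, mulVec_add, mulVec_mulVec, Matrix.mul_assoc, q, ξ]
end
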